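/- Let A₁,…,A_d be Hermitian n×n matrices, U ∈ O(d), and Âⱼ = Σₛ u_{js} Aₛ. If there exists a unitary Q ∈ U(n) with Q Âⱼ Q* = Aⱼ for all j, then λ ∈ Λ(A₁,…,A_d) if and only if Uλ ∈ Λ(A₁,…,A_d), i.e. the Clifford spectrum is invariant under the action of U. -/

import Mathlib

/-!
Write `γ'ₛ = ∑ⱼ uⱼₛ γⱼ`. Conjugating by `Q ⊗ 1` turns the localizer at `Uλ` into
`∑ₛ (Aₛ - λₛ) ⊗ γ'ₛ`, so it suffices to intertwine `γ'` with `γ`. The map `f v = ∑ⱼ vⱼ γⱼ` on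
`ℝᵈ` satisfies `f v f w + f w f v = 2⟪v, w⟫`; hence `f v` is invertible for `v ≠ 0` and
`f v * f (ρᵥ x) = -(f x * f v)` for the reflection `ρᵥ` in `v⊥`. By Cartan–Dieudonné `U` is a
product of reflections, which gives an invertible `W` and a scalar `ε` with `W γ'ₛ = ε γₛ W`;
then `1 ⊗ W` conjugates one localizer to `ε` times the other.
-/

open scoped Kronecker Matrix

open scoped RealInnerProductSpace

section Clifford

variable {V R : Type*} [NormedAddCommGroup V] [InnerProductSpace ℝ V] [Ring R] [Algebra ℝ R]

def IsCliffordMap (f : V →ₗ[ℝ] R) : Prop :=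
  ∀ v w, f v * f w + f w * f v = algebraMap ℝ R (2 * ⟪v, w⟫)

theorem IsCliffordMap.mul_self {f : V →ₗ[ℝ] R} (hf : IsCliffordMap f) (v : V) :
    f v * f v = algebraMap ℝ R (‖v‖ ^ 2) := by
  apply smul_right_injective R (two_ne_zero' ℝ)
  dsimp only
  rw [two_smul, hf v v, real_inner_self_eq_norm_sq, Algebra.smul_def, ← map_mul]

def intertwinedIsometries (f : V →ₗ[ℝ] R) : Submonoid (V ≃ₗᵢ[ℝ] V) where
  carrier := {φ | ∃ (W : Rˣ) (ε : ℝˣ), ∀ x, (W : R) * f (φ x) = (ε : ℝ) • (f x * W)}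
  one_mem' := ⟨1, 1, fun x => by simp⟩
  mul_mem' := by
    rintro φ ψ ⟨W₁, ε₁, h₁⟩ ⟨W₂, ε₂, h₂⟩
    refine ⟨W₂ * W₁, ε₁ * ε₂, fun x => ?_⟩
    rw [LinearIsometryEquiv.coe_mul, Function.comp_apply, Units.val_mul, mul_assoc, h₁,
      mul_smul_comm, ← mul_assoc, h₂, smul_mul_assoc, smul_smul, Units.val_mul, mul_assoc]

theorem IsCliffordMap.reflection_mem_intertwinedIsometries {f : V →ₗ[ℝ] R}
    (hf : IsCliffordMap f) (v : V) :
    (ℝ ∙ v)ᗮ.reflection ∈ intertwinedIsometries f := by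
  have hρ (x : V) : (ℝ ∙ v)ᗮ.reflection x = x - (2 * (⟪v, x⟫ / ‖v‖ ^ 2)) • v := by
    rw [Submodule.reflection_orthogonal_apply, Submodule.reflection_singleton_apply, mul_smul]
    module
  rcases eq_or_ne v 0 with rfl | hv
  · exact ⟨1, 1, fun x => by rw [hρ]; simp⟩
  have hnorm : ‖v‖ ^ 2 ≠ 0 := by positivity
  have hinv : (‖v‖ ^ 2)⁻¹ • algebraMap ℝ R (‖v‖ ^ 2) = 1 := by
    rw [Algebra.algebraMap_eq_smul_one, smul_smul, inv_mul_cancel₀ hnorm, one_smul]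
  let W : Rˣ :=
    ⟨f v, (‖v‖ ^ 2)⁻¹ • f v, by rw [mul_smul_comm, hf.mul_self, hinv], by
      rw [smul_mul_assoc, hf.mul_self, hinv]⟩
  refine ⟨W, -1, fun x => ?_⟩
  have hc : (2 * (⟪v, x⟫ / ‖v‖ ^ 2)) * ‖v‖ ^ 2 = 2 * ⟪v, x⟫ := by field_simp
  calc f v * f ((ℝ ∙ v)ᗮ.reflection x)
      = f v * f x - algebraMap ℝ R (2 * ⟪v, x⟫) := by
        rw [hρ, map_sub, map_smul, mul_sub, mul_smul_comm, hf.mul_self, Algebra.smul_def,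
          ← map_mul (algebraMap ℝ R), hc]
    _ = ((-1 : ℝˣ) : ℝ) • (f x * f v) := by
        rw [← hf v x]; simp

theorem IsCliffordMap.intertwinedIsometries_eq_top [FiniteDimensional ℝ V] {f : V →ₗ[ℝ] R}
    (hf : IsCliffordMap f) : intertwinedIsometries f = ⊤ := by
  refine (Submonoid.eq_top_iff' _).mpr fun φ => ?_
  obtain ⟨l, -, rfl⟩ := φ.reflections_generate_dim
  exact Submonoid.list_prod_mem _ <| by
    simpa using fun v _ => hf.reflection_mem_intertwinedIsometries v

end Clifford

section CliffordFamily

variable {ι R : Type*} [Fintype ι] [Ring R] [Algebra ℝ R]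

def cliffordMap (γ : ι → R) : EuclideanSpace ℝ ι →ₗ[ℝ] R :=
  (Fintype.linearCombination ℝ γ).comp (WithLp.linearEquiv 2 ℝ (ι → ℝ)).toLinearMap

theorem cliffordMap_apply (γ : ι → R) (x : EuclideanSpace ℝ ι) :
    cliffordMap γ x = ∑ j, x j • γ j := by
  simp [cliffordMap, Fintype.linearCombination_apply]

theorem isCliffordMap_cliffordMap {γ : ι → R} (hsq : ∀ j, γ j * γ j = 1)
    (hanti : ∀ j k, j ≠ k → γ j * γ k = -(γ k * γ j)) : IsCliffordMap (cliffordMap γ) := by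
  classical
  have hγ (j k : ι) : γ j * γ k + γ k * γ j = algebraMap ℝ R (if j = k then 2 else 0) := by
    split_ifs with h
    · subst h; rw [hsq, map_ofNat, one_add_one_eq_two]
    · rw [hanti j k h, neg_add_cancel, map_zero]
  intro v w
  simp only [cliffordMap_apply, Finset.sum_mul_sum, smul_mul_smul_comm]
  rw [Finset.sum_comm (f := fun i j => (w i * v j) • (γ i * γ j))]
  simp only [← Finset.sum_add_distrib, mul_comm (w _), ← smul_add, hγ]
  simp only [Algebra.smul_def, ← map_mul, ← map_sum, mul_ite, mul_zero, Finset.sum_ite_eq,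
    Finset.mem_univ, if_true, EuclideanSpace.inner_eq_star_dotProduct]
  congr 1
  simp [dotProduct, Finset.mul_sum, mul_comm]

theorem exists_intertwiner_of_mem_orthogonalGroup [DecidableEq ι] {γ : ι → R}
    (hsq : ∀ j, γ j * γ j = 1) (hanti : ∀ j k, j ≠ k → γ j * γ k = -(γ k * γ j))
    {U : Matrix ι ι ℝ} (hU : U ∈ Matrix.orthogonalGroup ι ℝ) :
    ∃ (W : Rˣ) (ε : ℝˣ), ∀ s, (W : R) * ∑ j, U j s • γ j = (ε : ℝ) • (γ s * W) := by
  let φ := Unitary.linearIsometryEquiv ⟨Matrix.toEuclideanCLM (𝕜 := ℝ) U, Unitary.map_mem _ hU⟩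
  obtain ⟨W, ε, hW⟩ : φ ∈ intertwinedIsometries (cliffordMap γ) := by
    rw [(isCliffordMap_cliffordMap hsq hanti).intertwinedIsometries_eq_top]
    exact Submonoid.mem_top φ
  have hφ (x : EuclideanSpace ℝ ι) : (φ x).ofLp = U *ᵥ x.ofLp := rfl
  refine ⟨W, ε, fun s => ?_⟩
  simpa [hφ, cliffordMap_apply, Pi.single_apply] using hW (EuclideanSpace.single s 1)

end CliffordFamily

section Kronecker

variable {α ι n m : Type*} [CommRing α] [Fintype ι]

theorem sum_smul_kronecker_comm (c : ι → ι → α) (B : ι → Matrix n n α)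
    (γ : ι → Matrix m m α) :
    ∑ j, (∑ s, c j s • B s) ⊗ₖ γ j = ∑ s, B s ⊗ₖ (∑ j, c j s • γ j) := by
  ext ⟨i, k⟩ ⟨i', k'⟩
  simp only [Matrix.sum_apply, Matrix.kroneckerMap_apply, Matrix.smul_apply, smul_eq_mul,
    Finset.sum_mul, Finset.mul_sum]
  rw [Finset.sum_comm]
  exact Finset.sum_congr rfl fun _ _ => Finset.sum_congr rfl fun _ _ => by ring

theorem sum_mul_mul_kronecker [Fintype n] [Fintype m] [DecidableEq m] (P P' : Matrix n n α)
    (X : ι → Matrix n n α) (γ : ι → Matrix m m α) :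
    ∑ j, (P * X j * P') ⊗ₖ γ j = (P ⊗ₖ 1) * (∑ j, X j ⊗ₖ γ j) * (P' ⊗ₖ 1) := by
  simp only [Finset.mul_sum, Finset.sum_mul, ← Matrix.mul_kronecker_mul, mul_one, one_mul]

theorem isUnit_sum_kronecker_iff_of_mul_eq_smul_mul [Fintype n] [Fintype m] [DecidableEq n]
    [DecidableEq m]
    {W : Matrix m m α} (hW : IsUnit W) {c : α} (hc : IsUnit c) {γ γ' : ι → Matrix m m α}
    (h : ∀ s, W * γ' s = c • (γ s * W)) (B : ι → Matrix n n α) :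
    IsUnit (∑ s, B s ⊗ₖ γ' s) ↔ IsUnit (∑ s, B s ⊗ₖ γ s) := by
  have hW' : IsUnit ((1 : Matrix n n α) ⊗ₖ W) := Matrix.IsUnit.kronecker isUnit_one hW
  have hc' : IsUnit (c • 1 : Matrix (n × m) (n × m) α) := by
    simpa [Algebra.algebraMap_eq_smul_one] using hc.map (algebraMap α (Matrix (n × m) (n × m) α))
  have key : (1 ⊗ₖ W) * ∑ s, B s ⊗ₖ γ' s = (c • 1) * ((∑ s, B s ⊗ₖ γ s) * (1 ⊗ₖ W)) := by
    simp only [Finset.mul_sum, Finset.sum_mul, ← Matrix.mul_kronecker_mul, one_mul, mul_one, h,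
      Matrix.kronecker_smul, smul_one_mul]
  rw [← hW'.mul_left_iff, key, hc'.mul_left_iff, hW'.mul_right_iff]

end Kronecker

theorem clifford_spectrum_symmetry_general
    {d n m : ℕ} (A : Fin d → Matrix (Fin n) (Fin n) ℂ)
    (γ : Fin d → Matrix (Fin m) (Fin m) ℂ)
    (hsq : ∀ j, γ j * γ j = 1)
    (hanti : ∀ j k, j ≠ k → γ j * γ k = -(γ k * γ j))
    (U : Matrix (Fin d) (Fin d) ℝ) (hU : U ∈ Matrix.orthogonalGroup (Fin d) ℝ)
    (Q : Matrix (Fin n) (Fin n) ℂ) (hQ : Q ∈ Matrix.unitaryGroup (Fin n) ℂ)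
    (hconj : ∀ j, Q * (∑ s, (U j s : ℂ) • A s) * Qᴴ = A j)
    (lam : Fin d → ℝ) :
    (¬ IsUnit (∑ j, ((A j - (lam j : ℂ) • 1) ⊗ₖ γ j))) ↔
    (¬ IsUnit (∑ j, ((A j - (U.mulVec lam j : ℂ) • 1) ⊗ₖ γ j))) := by
  have hQQ : Q * Qᴴ = 1 := Matrix.mem_unitaryGroup_iff.mp hQ
  have hQ₁ : IsUnit (Q ⊗ₖ (1 : Matrix (Fin m) (Fin m) ℂ)) :=
    Matrix.IsUnit.kronecker (Unitary.isUnit_coe (U := ⟨Q, hQ⟩)) isUnit_one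
  have hQ₂ : IsUnit (Qᴴ ⊗ₖ (1 : Matrix (Fin m) (Fin m) ℂ)) :=
    Matrix.IsUnit.kronecker (Unitary.isUnit_coe (U := star ⟨Q, hQ⟩)) isUnit_one
  obtain ⟨W, ε, hW⟩ := exists_intertwiner_of_mem_orthogonalGroup hsq hanti hU
  have hW' (s : Fin d) : (W : Matrix (Fin m) (Fin m) ℂ) * ∑ j, (U j s : ℂ) • γ j
      = ((ε : ℝ) : ℂ) • (γ s * W) := by
    simpa only [Complex.coe_smul] using hW s
  have hloc : ∑ j, (A j - (U.mulVec lam j : ℂ) • 1) ⊗ₖ γ j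
      = (Q ⊗ₖ 1) * (∑ s, (A s - (lam s : ℂ) • 1) ⊗ₖ ∑ j, (U j s : ℂ) • γ j) * (Qᴴ ⊗ₖ 1) := by
    rw [← sum_smul_kronecker_comm, ← sum_mul_mul_kronecker]
    refine Finset.sum_congr rfl fun j _ => ?_
    have hlam : (U.mulVec lam j : ℂ) = ∑ s, (U j s : ℂ) * lam s := by
      simp [Matrix.mulVec, dotProduct]
    rw [hlam, Finset.sum_smul, ← hconj j]
    simp only [smul_sub, Finset.sum_sub_distrib, smul_smul, mul_sub, sub_mul, Finset.mul_sum,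
      Finset.sum_mul, mul_smul_comm, smul_mul_assoc, mul_one, hQQ]
  rw [not_iff_not, hloc, hQ₂.mul_right_iff, hQ₁.mul_left_iff,
    isUnit_sum_kronecker_iff_of_mul_eq_smul_mul W.isUnit (ε.isUnit.map (algebraMap ℝ ℂ)) hW']

theorem clifford_spectrum_symmetry
    {d n m : ℕ} (A : Fin d → Matrix (Fin n) (Fin n) ℂ)
    (hA : ∀ j, (A j).IsHermitian)
    (γ : Fin d → Matrix (Fin m) (Fin m) ℂ)
    (hherm : ∀ j, (γ j).IsHermitian)
    (hsq : ∀ j, γ j * γ j = 1)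
    (hanti : ∀ j k, j ≠ k → γ j * γ k = -(γ k * γ j))
    (U : Matrix (Fin d) (Fin d) ℝ) (hU : U ∈ Matrix.orthogonalGroup (Fin d) ℝ)
    (Q : Matrix (Fin n) (Fin n) ℂ) (hQ : Q ∈ Matrix.unitaryGroup (Fin n) ℂ)
    (hconj : ∀ j, Q * (∑ s, (U j s : ℂ) • A s) * Qᴴ = A j)
    (lam : Fin d → ℝ) :
    (¬ IsUnit (∑ j, ((A j - (lam j : ℂ) • 1) ⊗ₖ γ j))) ↔
    (¬ IsUnit (∑ j, ((A j - (U.mulVec lam j : ℂ) • 1) ⊗ₖ γ j))) :=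
  clifford_spectrum_symmetry_general A γ hsq hanti U hU Q hQ hconj lam
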